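/- Let (A,∘,B) be a 2-dimensional quadratic Novikov algebra over a field of characteristic zero, and suppose there is a nonzero element e₁ ∈ A such that a∘e₁ = 0 for all a ∈ A. Then the product ∘ on A is identically zero. -/
import Mathlib


/-- A 2-dimensional quadratic Novikov algebra containing a nonzero element
e₁ with a∘e₁ = 0 for all a must have identically zero product. -/
theorem two_dim_quadratic_novikov_right_annihilator_trivial
    {k A : Type*} [Field k] [CharZero k] [AddCommGroup A] [Module k A]
    (h2 : Module.finrank k A = 2)
    (mul : A →ₗ[k] A →ₗ[k] A) (B : LinearMap.BilinForm k A)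
    (hnov1 : ∀ a b c, mul (mul a b) c - mul a (mul b c) = mul (mul b a) c - mul b (mul a c))
    (hnov2 : ∀ a b c, mul (mul a b) c = mul (mul a c) b)
    (hsym : ∀ a b, B a b = B b a)
    (hnd : ∀ a, (∀ b, B a b = 0) → a = 0)
    (hinv : ∀ a b c, B (mul a b) c = -(B b (mul a c + mul c a)))
    (e₁ : A) (he₁ : e₁ ≠ 0) (hann : ∀ a, mul a e₁ = 0) :
    ∀ a b, mul a b = 0 := by
  haveI : FiniteDimensional k A := FiniteDimensional.of_finrank_pos (by omega)
  -- find e₂ outside span of e₁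
  have hspan1 : Submodule.span k {e₁} ≠ ⊤ := by
    intro h
    have h1 : Module.finrank k (Submodule.span k {e₁}) = 1 := finrank_span_singleton he₁
    rw [h, finrank_top, h2] at h1
    omega
  obtain ⟨e₂, he₂⟩ : ∃ e₂, e₂ ∉ Submodule.span k ({e₁} : Set A) := by
    by_contra h
    push_neg at h
    exact hspan1 (Submodule.eq_top_iff'.2 h)
  -- linear independence of e₁, e₂
  have li : LinearIndependent k ![e₁, e₂] := by
    rw [LinearIndependent.pair_iff]
    intro s t hst
    by_cases ht : t = 0
    · subst ht
      simp only [zero_smul, add_zero] at hst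
      exact ⟨by simpa [he₁] using (smul_eq_zero.mp hst), rfl⟩
    · exfalso
      apply he₂
      have h1 : t • e₂ = -(s • e₁) := by
        rw [eq_neg_iff_add_eq_zero, add_comm]; exact hst
      have h' : e₂ = (t⁻¹ * (-s)) • e₁ := by
        rw [mul_smul, neg_smul, ← h1, inv_smul_smul₀ ht]
      rw [h']
      exact Submodule.smul_mem _ _ (Submodule.mem_span_singleton_self e₁)
  have hr : Set.range ![e₁, e₂] = ({e₁, e₂} : Set A) := by
    ext x
    simp only [Set.mem_range, Fin.exists_fin_two, Matrix.cons_val_zero, Matrix.cons_val_one,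
      Matrix.head_cons, Set.mem_insert_iff, Set.mem_singleton_iff, eq_comm]
  have hspan : Submodule.span k ({e₁, e₂} : Set A) = ⊤ := by
    apply Submodule.eq_top_of_finrank_eq
    have h3 := finrank_span_eq_card li
    rw [hr] at h3
    rw [h3, h2]
    simp
  have mem : ∀ x : A, ∃ m n : k, m • e₁ + n • e₂ = x := by
    intro x
    have : x ∈ Submodule.span k ({e₁, e₂} : Set A) := hspan ▸ Submodule.mem_top
    exact Submodule.mem_span_pair.mp this
  -- key orthogonality facts
  have key1 : ∀ a c : A, B e₁ (mul a c + mul c a) = 0 := by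
    intro a c
    have h := hinv a e₁ c
    rw [hann a] at h
    simp only [map_zero, LinearMap.zero_apply] at h
    linear_combination h
  have hBe1u : B e₁ (mul e₁ e₂) = 0 := by
    have h := key1 e₁ e₂
    rwa [hann e₂, add_zero] at h
  have hBe1v : B e₁ (mul e₂ e₂) = 0 := by
    have h := key1 e₂ e₂
    rw [map_add] at h
    linear_combination h / 2
  have hBe2u : B e₂ (mul e₁ e₂) = 0 := by
    have h := hinv e₂ e₂ e₁
    rw [hsym (mul e₂ e₂) e₁, hBe1v, hann e₂, map_add, map_zero, zero_add] at h
    linear_combination h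
  have hBe2v : B e₂ (mul e₂ e₂) = 0 := by
    have h := hinv e₂ e₂ e₂
    rw [map_add, hsym (mul e₂ e₂) e₂] at h
    linear_combination h / 3
  -- conclude mul e₁ e₂ = 0 and mul e₂ e₂ = 0
  have hu : mul e₁ e₂ = 0 := by
    apply hnd
    intro b
    obtain ⟨m, n, rfl⟩ := mem b
    rw [map_add, map_smul, map_smul, hsym _ e₁, hsym _ e₂, hBe1u, hBe2u]
    simp
  have hv : mul e₂ e₂ = 0 := by
    apply hnd
    intro b
    obtain ⟨m, n, rfl⟩ := mem b
    rw [map_add, map_smul, map_smul, hsym _ e₁, hsym _ e₂, hBe1v, hBe2v]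
    simp
  -- final expansion
  intro a b
  obtain ⟨m, n, rfl⟩ := mem a
  obtain ⟨p, q, rfl⟩ := mem b
  simp only [map_add, map_smul, LinearMap.add_apply, LinearMap.smul_apply,
    hann, hu, hv, smul_zero, add_zero, zero_add]
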